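/- Let n, k be integers with 0 ≤ k ≤ n and let f ∈ A_{n,k}. Then f ∈ A⁰_{n,k} if and only if f is invariant under simultaneous shifts of all variables by a constant, i.e. for every c ∈ ℂ the substitution x_i ↦ x_i + c (for all i simultaneously) leaves f unchanged: aeval (fun i => X i + C c) f = f in MvPolynomial (Fin n) ℂ. -/

import Mathlib

open MvPolynomial Finset

noncomputable section

/-- The "square-free monomial" `x_I = ∏_{i ∈ I} x_i`. -/
def xI (n : ℕ) (I : Finset (Fin n)) : MvPolynomial (Fin n) ℂ := ∏ i ∈ I, X i

/-- `A_{n,k}`: the span of the square-free monomials of degree `k`. -/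
def Aspace (n k : ℕ) : Submodule ℂ (MvPolynomial (Fin n) ℂ) :=
  Submodule.span ℂ {f | ∃ I : Finset (Fin n), I.card = k ∧ f = xI n I}

/-- The coefficient `c_I` of the monomial `x_I` in `f`. -/
def coeffI {n : ℕ} (f : MvPolynomial (Fin n) ℂ) (I : Finset (Fin n)) : ℂ :=
  MvPolynomial.coeff (∑ i ∈ I, Finsupp.single i 1) f

/-- `A⁰_{n,k}`: elements `∑ c_I x_I` of `A_{n,k}` with `∑_{j ∉ J} c_{J ∪ {j}} = 0`
for every `(k-1)`-element subset `J`. -/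
def A0space (n k : ℕ) : Submodule ℂ (MvPolynomial (Fin n) ℂ) where
  carrier := {f | f ∈ Aspace n k ∧ ∀ J : Finset (Fin n), J.card = k - 1 →
    ∑ j ∈ Jᶜ, coeffI f (insert j J) = 0}
  add_mem' := by
    rintro f g ⟨hf1, hf2⟩ ⟨hg1, hg2⟩
    refine ⟨Submodule.add_mem _ hf1 hg1, fun J hJ => ?_⟩
    have h1 := hf2 J hJ
    have h2 := hg2 J hJ
    simp only [coeffI] at h1 h2 ⊢
    simp only [coeff_add]
    rw [Finset.sum_add_distrib, h1, h2, add_zero]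
  zero_mem' := by
    refine ⟨Submodule.zero_mem _, fun J hJ => ?_⟩
    simp [coeffI]
  smul_mem' := by
    rintro c f ⟨hf1, hf2⟩
    refine ⟨Submodule.smul_mem _ c hf1, fun J hJ => ?_⟩
    have h1 := hf2 J hJ
    simp only [coeffI] at h1 ⊢
    simp only [coeff_smul, smul_eq_mul]
    rw [← Finset.mul_sum, h1, mul_zero]

/-- `ψ_n^l`, the linear map sending the square-free monomial `x_I` to
`x_I · ∑_S x_S`, the sum over all `l`-element subsets `S` of `{1,…,n} \ I`. -/
def psi (n l : ℕ) : MvPolynomial (Fin n) ℂ →ₗ[ℂ] MvPolynomial (Fin n) ℂ :=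
  ∑ S ∈ Finset.univ.filter (fun S : Finset (Fin n) => S.card = l),
    (LinearMap.mulRight ℂ (xI n S)).comp
      (aeval (fun i : Fin n => if i ∈ S then 0 else X i) :
        MvPolynomial (Fin n) ℂ →ₐ[ℂ] MvPolynomial (Fin n) ℂ).toLinearMap

/-- `H^k_{n,m} = ψ_n^{m-k}(A⁰_{n,k})`. -/
def Hspace (n m k : ℕ) : Submodule ℂ (MvPolynomial (Fin n) ℂ) :=
  (A0space n k).map (psi n (m - k))

/-- The squared norm of a form: the monomials `x_I` are an orthonormal basis. -/
def sqNorm {n : ℕ} (f : MvPolynomial (Fin n) ℂ) : ℝ :=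
  ∑ d ∈ f.support, Complex.normSq (f.coeff d)

/-- The inner product of two forms: the monomials `x_I` are an orthonormal basis. -/
def pInner {n : ℕ} (f g : MvPolynomial (Fin n) ℂ) : ℂ :=
  ∑ d ∈ f.support, f.coeff d * (starRingEnd ℂ) (g.coeff d)

def dI {n : ℕ} (I : Finset (Fin n)) : Fin n →₀ ℕ := ∑ i ∈ I, Finsupp.single i 1

lemma coeffI_eq {n : ℕ} (f : MvPolynomial (Fin n) ℂ) (I : Finset (Fin n)) :
    coeffI f I = MvPolynomial.coeff (dI I) f := rfl

lemma dI_apply {n : ℕ} (I : Finset (Fin n)) (j : Fin n) :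
    dI I j = if j ∈ I then 1 else 0 := by
  classical
  simp [dI, Finsupp.single_apply]

lemma dI_inj {n : ℕ} {I J : Finset (Fin n)} (h : dI I = dI J) : I = J := by
  ext j
  have := congrFun (congrArg (fun g : Fin n →₀ ℕ => (g : Fin n → ℕ)) h) j
  simp only [dI_apply] at this
  by_cases hI : j ∈ I <;> by_cases hJ : j ∈ J <;> simp_all

lemma xI_eq_monomial (n : ℕ) (I : Finset (Fin n)) : xI n I = monomial (dI I) 1 := by
  classical
  induction I using Finset.induction_on with
  | empty => simp [xI, dI]
  | insert _ _ h ih =>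
    rw [xI, Finset.prod_insert h, ← xI, ih, X, monomial_mul, one_mul]
    congr 1
    simp [dI, Finset.sum_insert h]

lemma coeff_xI {n : ℕ} (S I : Finset (Fin n)) :
    MvPolynomial.coeff (dI S) (xI n I) = if S = I then 1 else 0 := by
  classical
  rw [xI_eq_monomial, coeff_monomial]
  by_cases h : S = I
  · simp [h]
  · rw [if_neg (fun hh => h (dI_inj hh).symm), if_neg h]

lemma repr_sum {n k : ℕ} {f : MvPolynomial (Fin n) ℂ} (hf : f ∈ Aspace n k) :
    f = ∑ I ∈ Finset.powersetCard k Finset.univ,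
      MvPolynomial.coeff (dI I) f • xI n I := by
  classical
  set L : MvPolynomial (Fin n) ℂ →ₗ[ℂ] MvPolynomial (Fin n) ℂ :=
    ∑ I ∈ Finset.powersetCard k Finset.univ,
      (MvPolynomial.lcoeff ℂ (dI I)).smulRight (xI n I) with hL
  have hLapp : ∀ g, L g = ∑ I ∈ Finset.powersetCard k Finset.univ,
      MvPolynomial.coeff (dI I) g • xI n I := by
    intro g
    rw [hL, LinearMap.sum_apply]
    simp [LinearMap.smulRight_apply, lcoeff_apply]
  have hle : Aspace n k ≤ LinearMap.eqLocus L LinearMap.id := by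
    rw [Aspace, Submodule.span_le]
    rintro g ⟨I₀, hI₀, rfl⟩
    have : L (xI n I₀) = xI n I₀ := by
      rw [hLapp]
      rw [Finset.sum_congr rfl (fun I _ => by rw [coeff_xI])]
      have : ∀ I ∈ Finset.powersetCard k (Finset.univ : Finset (Fin n)),
          (if I = I₀ then (1:ℂ) else 0) • xI n I = if I = I₀ then xI n I else 0 := by
        intro I _; split <;> simp
      rw [Finset.sum_congr rfl this, Finset.sum_ite_eq' _ I₀ (fun I => xI n I)]
      rw [if_pos (Finset.mem_powersetCard_univ.mpr hI₀)]
    exact this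
  have := hle hf
  rw [LinearMap.mem_eqLocus] at this
  rw [← hLapp, this, LinearMap.id_apply]

lemma coeff_dI_zero {n k : ℕ} {f : MvPolynomial (Fin n) ℂ} (hf : f ∈ Aspace n k)
    {S : Finset (Fin n)} (hS : S.card ≠ k) : MvPolynomial.coeff (dI S) f = 0 := by
  classical
  have h := congrArg (MvPolynomial.coeff (dI S)) (repr_sum hf)
  rw [coeff_sum] at h
  rw [h]
  refine Finset.sum_eq_zero fun I hI => ?_
  rw [coeff_smul, coeff_xI, if_neg, smul_zero]
  rintro rfl
  exact hS (Finset.mem_powersetCard_univ.mp hI)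

lemma shift_xI {n : ℕ} (c : ℂ) (I : Finset (Fin n)) :
    aeval (fun i : Fin n => X i + C c) (xI n I) =
      ∑ S ∈ I.powerset, C (c ^ (I.card - S.card)) * xI n S := by
  classical
  rw [xI, map_prod]
  simp only [aeval_X]
  rw [Finset.prod_add]
  refine Finset.sum_congr rfl fun S hS => ?_
  rw [Finset.prod_const, ← C_pow, Finset.card_sdiff_of_subset (Finset.mem_powerset.mp hS), ← xI, mul_comm]

def sig (n k : ℕ) (f : MvPolynomial (Fin n) ℂ) (S : Finset (Fin n)) : ℂ :=
  ∑ I ∈ (Finset.powersetCard k Finset.univ).filter (fun I => S ⊆ I),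
    MvPolynomial.coeff (dI I) f

lemma expand_shift {n k : ℕ} {f : MvPolynomial (Fin n) ℂ} (hf : f ∈ Aspace n k) (c : ℂ) :
    aeval (fun i : Fin n => X i + C c) f =
      ∑ S : Finset (Fin n), (c ^ (k - S.card) * sig n k f S) • xI n S := by
  classical
  conv_lhs => rw [repr_sum hf]
  rw [map_sum]
  simp only [map_smul, shift_xI]
  simp only [Finset.smul_sum]
  rw [Finset.sum_comm' (s := Finset.powersetCard k Finset.univ)
    (t := fun I => I.powerset) (t' := Finset.univ)
    (s' := fun S => (Finset.powersetCard k Finset.univ).filter (fun I => S ⊆ I))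
    (h := by
      intro I S
      simp [Finset.mem_powersetCard_univ, Finset.mem_powerset, and_comm])]
  refine Finset.sum_congr rfl fun S _ => ?_
  rw [sig, Finset.mul_sum, Finset.sum_smul]
  refine Finset.sum_congr rfl fun I hI => ?_
  rw [Finset.mem_filter] at hI
  have hIk : I.card = k := Finset.mem_powersetCard_univ.mp hI.1
  rw [hIk, ← smul_eq_C_mul, smul_smul, mul_comm]

lemma coeff_expand {n : ℕ} (b : Finset (Fin n) → ℂ) (S₀ : Finset (Fin n)) :
    MvPolynomial.coeff (dI S₀) (∑ S : Finset (Fin n), b S • xI n S) = b S₀ := by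
  classical
  rw [coeff_sum]
  rw [Finset.sum_congr rfl (fun S _ => by rw [coeff_smul, coeff_xI])]
  have : ∀ S ∈ (Finset.univ : Finset (Finset (Fin n))),
      (b S • if S₀ = S then (1:ℂ) else 0) = if S₀ = S then b S else 0 := by
    intro S _; split <;> simp
  rw [Finset.sum_congr rfl this, Finset.sum_ite_eq _ S₀ b, if_pos (Finset.mem_univ _)]

lemma sig_eq_insert_sum {n k : ℕ} (f : MvPolynomial (Fin n) ℂ) {S : Finset (Fin n)}
    (hS : S.card + 1 = k) :
    sig n k f S = ∑ j ∈ Sᶜ, MvPolynomial.coeff (dI (insert j S)) f := by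
  classical
  refine (Finset.sum_bij (fun j _ => insert j S) ?_ ?_ ?_ ?_).symm
  · intro j hj
    rw [Finset.mem_compl] at hj
    rw [Finset.mem_filter]
    exact ⟨Finset.mem_powersetCard_univ.mpr (by rw [Finset.card_insert_of_notMem hj, hS]),
      Finset.subset_insert _ _⟩
  · intro j₁ hj₁ j₂ hj₂ h
    rw [Finset.mem_compl] at hj₁ hj₂
    have h' : insert j₁ S = insert j₂ S := h
    have : j₁ ∈ insert j₂ S := h' ▸ Finset.mem_insert_self j₁ S
    rcases Finset.mem_insert.mp this with h' | h'
    · exact h'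
    · exact absurd h' hj₁
  · intro I hI
    rw [Finset.mem_filter] at hI
    have hIk : I.card = k := Finset.mem_powersetCard_univ.mp hI.1
    have hcard : (I \ S).card = 1 := by
      rw [Finset.card_sdiff_of_subset hI.2]; omega
    obtain ⟨j, hj⟩ := Finset.card_eq_one.mp hcard
    have hjI : j ∈ I \ S := hj ▸ Finset.mem_singleton_self j
    rw [Finset.mem_sdiff] at hjI
    refine ⟨j, Finset.mem_compl.mpr hjI.2, ?_⟩
    show insert j S = I
    rw [Finset.insert_eq, ← hj, Finset.sdiff_union_of_subset hI.2]
  · intro j hj; rfl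

lemma sig_zero {n k : ℕ} {f : MvPolynomial (Fin n) ℂ}
    (hA0 : ∀ J : Finset (Fin n), J.card = k - 1 →
      ∑ j ∈ Jᶜ, MvPolynomial.coeff (dI (insert j J)) f = 0) :
    ∀ d : ℕ, 1 ≤ d → ∀ S : Finset (Fin n), S.card + d = k → sig n k f S = 0 := by
  classical
  intro d
  induction d with
  | zero => omega
  | succ d ih =>
    intro _ S hcard
    rcases Nat.eq_zero_or_pos d with rfl | hd
    · rw [sig_eq_insert_sum f hcard]
      exact hA0 S (by omega)
    · have hsum : ∑ j ∈ Sᶜ, sig n k f (insert j S) = 0 := by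
        refine Finset.sum_eq_zero fun j hj => ?_
        rw [Finset.mem_compl] at hj
        exact ih hd _ (by rw [Finset.card_insert_of_notMem hj]; omega)
      have hswap : ∑ j ∈ Sᶜ, sig n k f (insert j S) =
          ∑ I ∈ (Finset.powersetCard k Finset.univ).filter (fun I => S ⊆ I),
            ∑ j ∈ I \ S, MvPolynomial.coeff (dI I) f := by
        simp only [sig]
        refine Finset.sum_comm' ?_
        intro j I
        simp only [Finset.mem_compl, Finset.mem_filter, Finset.mem_sdiff,
          Finset.mem_powersetCard_univ]
        constructor
        · rintro ⟨hjS, hIk, hins⟩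
          have hSI : S ⊆ I := (Finset.subset_insert j S).trans hins
          have hjI : j ∈ I := hins (Finset.mem_insert_self j S)
          tauto
        · intro h
          have hjS : j ∉ S := by tauto
          have hjI : j ∈ I := by tauto
          have hSI : S ⊆ I := by tauto
          have hIk : I.card = k := by tauto
          exact ⟨hjS, hIk, Finset.insert_subset hjI hSI⟩
      have hconst : ∑ I ∈ (Finset.powersetCard k Finset.univ).filter (fun I => S ⊆ I),
          ∑ j ∈ I \ S, MvPolynomial.coeff (dI I) f = ((d+1 : ℕ) : ℂ) * sig n k f S := by
        rw [sig, Finset.mul_sum]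
        refine Finset.sum_congr rfl fun I hI => ?_
        rw [Finset.mem_filter] at hI
        have hIk : I.card = k := Finset.mem_powersetCard_univ.mp hI.1
        rw [Finset.sum_const, Finset.card_sdiff_of_subset hI.2, hIk, nsmul_eq_mul]
        congr 2
        omega
      have : ((d+1 : ℕ) : ℂ) * sig n k f S = 0 := by rw [← hconst, ← hswap, hsum]
      have hne : ((d+1 : ℕ) : ℂ) ≠ 0 := Nat.cast_ne_zero.mpr (by omega)
      exact (mul_eq_zero.mp this).resolve_left hne

/-- For `0 ≤ k ≤ n` and `f ∈ A_{n,k}`: `f ∈ A⁰_{n,k}` iff `f` is invariant under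
simultaneous shifts of all variables by a constant. -/
theorem A0_iff_shift_invariant (n k : ℕ) (hk : k ≤ n)
    (f : MvPolynomial (Fin n) ℂ) (hf : f ∈ Aspace n k) :
    f ∈ A0space n k ↔
      ∀ c : ℂ, aeval (fun i : Fin n => X i + C c) f = f := by
  classical
  constructor
  · rintro ⟨-, hA0⟩ c
    have hA0' : ∀ J : Finset (Fin n), J.card = k - 1 →
        ∑ j ∈ Jᶜ, MvPolynomial.coeff (dI (insert j J)) f = 0 := by
      intro J hJ
      simpa [coeffI_eq] using hA0 J hJ
    rw [expand_shift hf c]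
    have hterm : ∀ S : Finset (Fin n),
        (c ^ (k - S.card) * sig n k f S) • xI n S =
          if S ∈ Finset.powersetCard k Finset.univ
          then MvPolynomial.coeff (dI S) f • xI n S else 0 := by
      intro S
      by_cases h1 : S.card = k
      · rw [if_pos (Finset.mem_powersetCard_univ.mpr h1)]
        have hfilter : (Finset.powersetCard k Finset.univ).filter (fun I => S ⊆ I) = {S} := by
          ext I
          simp only [Finset.mem_filter, Finset.mem_powersetCard_univ, Finset.mem_singleton]
          constructor
          · rintro ⟨hIk, hSI⟩
            exact (Finset.eq_of_subset_of_card_le hSI (by omega)).symm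
          · rintro rfl
            exact ⟨h1, Finset.Subset.refl _⟩
        rw [sig, hfilter, Finset.sum_singleton, h1, Nat.sub_self, pow_zero, one_mul]
      · rw [if_neg (fun hm => h1 (Finset.mem_powersetCard_univ.mp hm))]
        rcases lt_or_gt_of_ne h1 with hlt | hgt
        · rw [sig_zero hA0' (k - S.card) (by omega) S (by omega), mul_zero, zero_smul]
        · have hempty : (Finset.powersetCard k Finset.univ).filter (fun I => S ⊆ I) = ∅ := by
            ext I
            simp only [Finset.mem_filter, Finset.mem_powersetCard_univ,
              Finset.notMem_empty, iff_false, not_and]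
            intro hIk hSI
            have := Finset.card_le_card hSI
            omega
          rw [sig, hempty, Finset.sum_empty, mul_zero, zero_smul]
    rw [Finset.sum_congr rfl (fun S _ => hterm S), Finset.sum_ite_mem,
      Finset.univ_inter, ← repr_sum hf]
  · intro hinv
    refine ⟨hf, fun J hJ => ?_⟩
    by_cases hk0 : k = 0
    · refine Finset.sum_eq_zero fun j hj => ?_
      rw [Finset.mem_compl] at hj
      rw [coeffI_eq]
      exact coeff_dI_zero hf (by rw [Finset.card_insert_of_notMem hj]; omega)
    · have h1 := hinv 1
      rw [expand_shift hf 1] at h1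
      have h2 := congrArg (MvPolynomial.coeff (dI J)) h1
      rw [coeff_expand] at h2
      rw [one_pow, coeff_dI_zero hf (show J.card ≠ k by omega), one_mul] at h2
      have h3 := sig_eq_insert_sum f (S := J) (show J.card + 1 = k by omega)
      simp only [coeffI_eq]
      rw [← h3, h2]

end
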